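/- Suppose Assumption A4 holds and σ > 0, and let V(t,t0) be the solution matrix of u̇ = σL(t)u. Then for all t ≥ t0 and all indices k and i ≠ k: V(t,t0)_{kk} ≥ e^{−σM₁(t−t0)}, and V(t,t0)_{ik} ≥ e^{−σM₁(t−t0)} · σ∫_{t0}^{t} l_ik(τ)dτ. In particular, if ∫_{t0}^{t0+T} l_ik(τ)dτ > δ for some δ, T > 0, then V(t0+T, t0)_{ik} ≥ e^{−σM₁T}σδ. -/

import Mathlib

/-!
`σL(t)` is nonnegative off the diagonal with entries bounded by `σM₁`. At a first time where
a column of `V` touches the barrier `-ε e^{(K+1)(t-t0)}` (with `K = mσM₁`) from above, its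
derivative is at least `-K` times the barrier's height, so it moves away faster than the
barrier falls; hence the barrier is never crossed, and `ε → 0` gives `V ≥ 0`. Once `V ≥ 0`,
`e^{σM₁(t-t0)} V_ik(t)` is nondecreasing, with derivative at least
`σ l_ik(t) e^{σM₁(t-t0)} V_kk(t) ≥ σ l_ik(t)` for `i ≠ k` by the diagonal bound; integrating
gives the off-diagonal bound.
-/

open Set Filter Topology MeasureTheory Real Matrix

theorem HasDerivAt.eventually_lt_right {f : ℝ → ℝ} {f' x : ℝ} (hf : HasDerivAt f f' x)
    (hf' : 0 < f') : ∀ᶠ y in 𝓝[>] x, f x < f y := by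
  filter_upwards [(hasDerivAt_iff_tendsto_slope_left_right.1 hf).2.eventually (lt_mem_nhds hf'),
    self_mem_nhdsWithin] with y hslope hxy
  exact (slope_pos_iff_of_le (le_of_lt hxy)).1 hslope

theorem hasDerivAt_exp_mul_sub_mul {f : ℝ → ℝ} {f' M a t : ℝ} (hf : HasDerivAt f f' t) :
    HasDerivAt (fun s => exp (M * (s - a)) * f s) (exp (M * (t - a)) * (M * f t + f')) t := by
  have hexp : HasDerivAt (fun s => exp (M * (s - a))) (exp (M * (t - a)) * M) t := by
    simpa using (((hasDerivAt_id t).sub_const a).const_mul M).exp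
  exact (hexp.mul hf).congr_deriv (by ring)

section Barrier

variable {ι : Type*} [Finite ι] {y y' : ℝ → ι → ℝ} {a K : ℝ}

theorem neg_mul_exp_le_of_deriv_ge_at_boundary
    (hy : ∀ t ≥ a, ∀ i, HasDerivAt (fun s => y s i) (y' t i) t)
    (ha : ∀ i, 0 ≤ y a i)
    (hbd : ∀ t ≥ a, ∀ η > 0, (∀ j, -η ≤ y t j) → ∀ i, y t i = -η → -(K * η) ≤ y' t i)
    {ε : ℝ} (hε : 0 < ε) : ∀ t ≥ a, ∀ i, -(ε * exp ((K + 1) * (t - a))) ≤ y t i := by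
  intro t ht
  set b : ℝ → ℝ := fun s => ε * exp ((K + 1) * (s - a)) with hb_def
  have hb_pos : ∀ s, 0 < b s := fun s => mul_pos hε (exp_pos _)
  have hb : ∀ s, HasDerivAt b ((K + 1) * b s) s := fun s =>
    (((((hasDerivAt_id s).sub_const a).const_mul (K + 1)).exp).const_mul ε).congr_deriv
      (by simp only [hb_def, id, mul_one]; ring)
  suffices Icc a t ⊆ {s | ∀ j, -b s ≤ y s j} from this ⟨ht, le_rfl⟩
  refine IsClosed.Icc_subset_of_forall_mem_nhdsWithin ?_ ?_ ?_
  · have hcont : ContinuousOn (fun s j => y s j) (Icc a t) := continuousOn_pi.2 fun j s hs =>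
      (hy s hs.1 j).continuousAt.continuousWithinAt
    convert isClosed_Icc.isClosed_le (continuousOn_pi.2 fun _ => (continuous_neg.comp
      (continuous_iff_continuousAt.2 fun s => (hb s).continuousAt)).continuousOn) hcont using 1
    ext s
    simp [Pi.le_def, and_comm]
  · intro j
    simpa [hb_def] using (ha j).trans' (neg_nonpos.2 hε.le)
  · rintro x ⟨hxS, hxa, -⟩
    refine eventually_all.2 fun j => ?_
    rcases (hxS j).lt_or_eq with hlt | heq
    · exact ((hb x).continuousAt.neg.eventually_lt (hy x hxa j).continuousAt hlt).filter_mono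
        nhdsWithin_le_nhds |>.mono fun s hs => hs.le
    · have hslope : 0 < y' x j + (K + 1) * b x := by
        linarith [hbd x hxa (b x) (hb_pos x) hxS j heq.symm, hb_pos x]
      filter_upwards [((hy x hxa j).add (hb x)).eventually_lt_right hslope] with s hs
      simp only [Pi.add_apply] at hs
      linarith

theorem nonneg_of_deriv_ge_at_boundary
    (hy : ∀ t ≥ a, ∀ i, HasDerivAt (fun s => y s i) (y' t i) t)
    (ha : ∀ i, 0 ≤ y a i)
    (hbd : ∀ t ≥ a, ∀ η > 0, (∀ j, -η ≤ y t j) → ∀ i, y t i = -η → -(K * η) ≤ y' t i) :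
    ∀ t ≥ a, ∀ i, 0 ≤ y t i := by
  intro t ht i
  refine le_of_forall_pos_le_add fun δ hδ => ?_
  have hC := exp_pos ((K + 1) * (t - a))
  have := neg_mul_exp_le_of_deriv_ge_at_boundary hy ha hbd (div_pos hδ hC) t ht i
  rw [div_mul_cancel₀ δ hC.ne'] at this
  linarith

end Barrier

section LinearSystem

variable {ι : Type*} [Fintype ι] {A : ℝ → Matrix ι ι ℝ} {y : ℝ → ι → ℝ}
  {a M : ℝ}

theorem nonneg_of_hasDerivAt_mulVec
    (hy : ∀ t ≥ a, ∀ i, HasDerivAt (fun s => y s i) ((A t *ᵥ y t) i) t)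
    (hoff : ∀ t ≥ a, ∀ i j, i ≠ j → 0 ≤ A t i j) (hbdd : ∀ t ≥ a, ∀ i j, |A t i j| ≤ M)
    (ha : ∀ i, 0 ≤ y a i) : ∀ t ≥ a, ∀ i, 0 ≤ y t i := by
  refine nonneg_of_deriv_ge_at_boundary (K := Fintype.card ι * M) hy ha ?_
  intro t ht η hη hge i hi
  have hterm : ∀ j, -(M * η) ≤ A t i j * y t j := by
    intro j
    rcases eq_or_ne i j with rfl | hij
    · rw [hi]
      nlinarith [le_of_abs_le (hbdd t ht i i)]
    · nlinarith [hoff t ht i j hij, hge j, le_of_abs_le (hbdd t ht i j)]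
  calc -(Fintype.card ι * M * η) = ∑ _j : ι, -(M * η) := by
        simp only [Finset.sum_const, Finset.card_univ, nsmul_eq_mul]; ring
    _ ≤ (A t *ᵥ y t) i := Finset.sum_le_sum fun j _ => hterm j

variable [DecidableEq ι]

theorem Matrix.sum_compl_le_mul_add_mulVec {B : Matrix ι ι ℝ} {v : ι → ℝ} {i : ι}
    (hdiag : -M ≤ B i i) (hv : 0 ≤ v i) :
    ∑ j ∈ {i}ᶜ, B i j * v j ≤ M * v i + (B *ᵥ v) i := by
  have hMi : 0 ≤ (M + B i i) * v i := mul_nonneg (by linarith) hv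
  simp only [Matrix.mulVec, dotProduct, Fintype.sum_eq_add_sum_compl i]
  linarith

theorem monotoneOn_exp_mul_sub_mul_of_hasDerivAt_mulVec
    (hy : ∀ t ≥ a, ∀ i, HasDerivAt (fun s => y s i) ((A t *ᵥ y t) i) t)
    (hoff : ∀ t ≥ a, ∀ i j, i ≠ j → 0 ≤ A t i j) (hdiag : ∀ t ≥ a, ∀ i, -M ≤ A t i i)
    (hnonneg : ∀ t ≥ a, ∀ i, 0 ≤ y t i) (i : ι) :
    MonotoneOn (fun s => exp (M * (s - a)) * y s i) (Ici a) := by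
  have hderiv := fun t ht => hasDerivAt_exp_mul_sub_mul (M := M) (a := a) (hy t ht i)
  refine monotoneOn_of_hasDerivWithinAt_nonneg (convex_Ici a)
    (fun t ht => (hderiv t ht).continuousAt.continuousWithinAt)
    (fun t ht => (hderiv t (interior_subset ht)).hasDerivWithinAt) fun t ht => ?_
  have ht : a ≤ t := interior_subset ht
  refine mul_nonneg (exp_pos _).le <| (Finset.sum_nonneg fun j hj => ?_).trans
    (Matrix.sum_compl_le_mul_add_mulVec (hdiag t ht i) (hnonneg t ht i))
  exact mul_nonneg (hoff t ht i j (by simpa [eq_comm] using hj)) (hnonneg t ht j)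

theorem exp_neg_mul_mul_le_of_hasDerivAt_mulVec
    (hy : ∀ t ≥ a, ∀ i, HasDerivAt (fun s => y s i) ((A t *ᵥ y t) i) t)
    (hoff : ∀ t ≥ a, ∀ i j, i ≠ j → 0 ≤ A t i j) (hdiag : ∀ t ≥ a, ∀ i, -M ≤ A t i i)
    (hnonneg : ∀ t ≥ a, ∀ i, 0 ≤ y t i) {t : ℝ} (ht : a ≤ t) (i : ι) :
    exp (-(M * (t - a))) * y a i ≤ y t i := by
  have := monotoneOn_exp_mul_sub_mul_of_hasDerivAt_mulVec hy hoff hdiag hnonneg i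
    self_mem_Ici ht ht
  rw [exp_neg, inv_mul_le_iff₀ (exp_pos _)]
  simpa using this

theorem exp_neg_mul_mul_integral_le_of_hasDerivAt_mulVec
    (hy : ∀ t ≥ a, ∀ i, HasDerivAt (fun s => y s i) ((A t *ᵥ y t) i) t)
    (hoff : ∀ t ≥ a, ∀ i j, i ≠ j → 0 ≤ A t i j) (hdiag : ∀ t ≥ a, ∀ i, -M ≤ A t i i)
    (hnonneg : ∀ t ≥ a, ∀ i, 0 ≤ y t i) {t : ℝ} (ht : a ≤ t) {i k : ι} (hik : i ≠ k)
    (hint : IntegrableOn (fun s => A s i k) (Icc a t)) :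
    exp (-(M * (t - a))) * (y a i + (∫ s in a..t, A s i k) * y a k) ≤ y t i := by
  have hderiv := fun s hs => hasDerivAt_exp_mul_sub_mul (M := M) (a := a) (hy s hs i)
  have hgrowth : ∀ s ∈ Ioo a t, A s i k * y a k ≤
      exp (M * (s - a)) * (M * y s i + (A s *ᵥ y s) i) := by
    intro s hs
    have hs : a ≤ s := hs.1.le
    have hk := monotoneOn_exp_mul_sub_mul_of_hasDerivAt_mulVec hy hoff hdiag hnonneg k
      self_mem_Ici hs hs
    simp only [sub_self, mul_zero, exp_zero, one_mul] at hk
    calc A s i k * y a k ≤ A s i k * (exp (M * (s - a)) * y s k) :=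
          mul_le_mul_of_nonneg_left hk (hoff s hs i k hik)
      _ = exp (M * (s - a)) * (A s i k * y s k) := by ring
      _ ≤ exp (M * (s - a)) * ∑ j ∈ {i}ᶜ, A s i j * y s j := by
          refine mul_le_mul_of_nonneg_left ?_ (exp_pos _).le
          refine Finset.single_le_sum (f := fun j => A s i j * y s j) (fun j hj => ?_)
            (by simpa [eq_comm] using hik.symm)
          exact mul_nonneg (hoff s hs i j (by simpa [eq_comm] using hj)) (hnonneg s hs j)
      _ ≤ _ := mul_le_mul_of_nonneg_left
          (Matrix.sum_compl_le_mul_add_mulVec (hdiag s hs i) (hnonneg s hs i)) (exp_pos _).le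
  have key := intervalIntegral.integral_le_sub_of_hasDeriv_right_of_le ht
    (fun s hs => (hderiv s hs.1).continuousAt.continuousWithinAt)
    (fun s hs => (hderiv s hs.1.le).hasDerivWithinAt) (hint.mul_const (y a k)) hgrowth
  rw [intervalIntegral.integral_mul_const] at key
  rw [exp_neg, inv_mul_le_iff₀ (exp_pos _)]
  simp only [sub_self, mul_zero, exp_zero, one_mul] at key
  linarith

end LinearSystem

theorem stmt_14_general (m : ℕ) (σ : ℝ) (hσ : 0 < σ)
    (L : ℝ → Matrix (Fin m) (Fin m) ℝ) (M₁ : ℝ)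
    (hmeas : ∀ i j, Measurable fun t => L t i j)
    (hoff : ∀ t, 0 ≤ t → ∀ i j, i ≠ j → 0 ≤ L t i j)
    (hbdd : ∀ t, 0 ≤ t → ∀ i j, |L t i j| ≤ M₁)
    (V : ℝ → ℝ → Matrix (Fin m) (Fin m) ℝ)
    (hV0 : ∀ t0, 0 ≤ t0 → V t0 t0 = 1)
    (hVd : ∀ t0, 0 ≤ t0 → ∀ t ∈ Set.Ici t0, ∀ i j,
        HasDerivAt (fun τ => V τ t0 i j) (σ * ∑ k, L t i k * V t t0 k j) t) :
    (∀ t0, 0 ≤ t0 → ∀ t ∈ Set.Ici t0, ∀ k : Fin m,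
      Real.exp (-(σ * M₁ * (t - t0))) ≤ V t t0 k k) ∧
    (∀ t0, 0 ≤ t0 → ∀ t ∈ Set.Ici t0, ∀ k i : Fin m, i ≠ k →
      Real.exp (-(σ * M₁ * (t - t0))) * (σ * ∫ τ in t0..t, L τ i k) ≤ V t t0 i k) ∧
    (∀ t0, 0 ≤ t0 → ∀ δ T : ℝ, 0 < δ → 0 < T → ∀ k i : Fin m, i ≠ k →
      δ < (∫ τ in t0..(t0 + T), L τ i k) →
      Real.exp (-(σ * M₁ * T)) * σ * δ ≤ V (t0 + T) t0 i k) := by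
  have hcol : ∀ t0 ≥ 0, ∀ k, ∀ t ≥ t0, ∀ i, HasDerivAt (fun s => V s t0 i k)
      (((σ • L t) *ᵥ fun j => V t t0 j k) i) t := fun t0 ht0 k t ht i => by
    simpa [mulVec, dotProduct, Finset.mul_sum, mul_assoc] using hVd t0 ht0 t ht i k
  have hoffσ : ∀ t0 ≥ (0 : ℝ), ∀ t ≥ t0, ∀ i j, i ≠ j → 0 ≤ (σ • L t) i j :=
    fun t0 ht0 t ht i j hij => mul_nonneg hσ.le (hoff t (ht0.trans ht) i j hij)
  have hbddσ : ∀ t0 ≥ (0 : ℝ), ∀ t ≥ t0, ∀ i j, |(σ • L t) i j| ≤ σ * M₁ :=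
    fun t0 ht0 t ht i j => by
      simpa [abs_mul, abs_of_pos hσ] using
        mul_le_mul_of_nonneg_left (hbdd t (ht0.trans ht) i j) hσ.le
  have hdiagσ : ∀ t0 ≥ (0 : ℝ), ∀ t ≥ t0, ∀ i, -(σ * M₁) ≤ (σ • L t) i i :=
    fun t0 ht0 t ht i => neg_le_of_abs_le (hbddσ t0 ht0 t ht i i)
  have hV : ∀ t0 ≥ 0, ∀ k, ∀ t ≥ t0, ∀ i, 0 ≤ V t t0 i k := fun t0 ht0 k =>
    nonneg_of_hasDerivAt_mulVec (hcol t0 ht0 k) (hoffσ t0 ht0) (hbddσ t0 ht0) fun i => by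
      simpa [hV0 t0 ht0] using zero_le_one_elem i k
  have part2 : ∀ t0, 0 ≤ t0 → ∀ t ∈ Set.Ici t0, ∀ k i : Fin m, i ≠ k →
      Real.exp (-(σ * M₁ * (t - t0))) * (σ * ∫ τ in t0..t, L τ i k) ≤ V t t0 i k := by
    intro t0 ht0 t ht k i hik
    have hint : IntegrableOn (fun s => (σ • L s) i k) (Icc t0 t) :=
      Measure.integrableOn_of_bounded measure_Icc_lt_top.ne
        ((hmeas i k).const_mul σ).aestronglyMeasurable
        (ae_restrict_of_forall_mem measurableSet_Icc fun s hs => hbddσ t0 ht0 s hs.1 i k)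
    simpa [hV0 t0 ht0, one_apply_ne hik, intervalIntegral.integral_const_mul] using
      exp_neg_mul_mul_integral_le_of_hasDerivAt_mulVec (hcol t0 ht0 k) (hoffσ t0 ht0)
        (hdiagσ t0 ht0) (hV t0 ht0 k) ht hik hint
  refine ⟨fun t0 ht0 t ht k => ?_, part2, fun t0 ht0 δ T _ hT k i hik hδ => ?_⟩
  · simpa [hV0 t0 ht0] using exp_neg_mul_mul_le_of_hasDerivAt_mulVec (hcol t0 ht0 k)
      (hoffσ t0 ht0) (hdiagσ t0 ht0) (hV t0 ht0 k) ht k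
  · calc Real.exp (-(σ * M₁ * T)) * σ * δ
        ≤ Real.exp (-(σ * M₁ * (t0 + T - t0))) * (σ * ∫ τ in t0..(t0 + T), L τ i k) := by
          rw [add_sub_cancel_left, mul_assoc]
          gcongr
      _ ≤ V (t0 + T) t0 i k := part2 t0 ht0 (t0 + T) (by simp [hT.le]) k i hik

/-- diagonal and off-diagonal lower bounds for the solution matrix of
`u̇ = σL(t)u` under Assumption A4:
`V(t,t0)_{kk} ≥ e^{−σM₁(t−t0)}` and, for `i ≠ k`,
`V(t,t0)_{ik} ≥ e^{−σM₁(t−t0)} σ ∫_{t0}^{t} l_ik`; in particular a `δ`-edge across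
`[t0,t0+T]` forces `V(t0+T,t0)_{ik} ≥ e^{−σM₁T} σ δ`. -/
theorem stmt_14 (m : ℕ) (hm : 0 < m) (σ : ℝ) (hσ : 0 < σ)
    (L : ℝ → Matrix (Fin m) (Fin m) ℝ) (M₁ : ℝ) (hM₁ : 0 < M₁)
    (hmeas : ∀ i j, Measurable fun t => L t i j)
    (hoff : ∀ t, 0 ≤ t → ∀ i j, i ≠ j → 0 ≤ L t i j)
    (hdiag : ∀ t, 0 ≤ t → ∀ i, L t i i = -∑ j ∈ ({i}ᶜ : Finset (Fin m)), L t i j)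
    (hbdd : ∀ t, 0 ≤ t → ∀ i j, |L t i j| ≤ M₁)
    (V : ℝ → ℝ → Matrix (Fin m) (Fin m) ℝ)
    (hV0 : ∀ t0, 0 ≤ t0 → V t0 t0 = 1)
    (hVd : ∀ t0, 0 ≤ t0 → ∀ t ∈ Set.Ici t0, ∀ i j,
        HasDerivAt (fun τ => V τ t0 i j) (σ * ∑ k, L t i k * V t t0 k j) t) :
    (∀ t0, 0 ≤ t0 → ∀ t ∈ Set.Ici t0, ∀ k : Fin m,
      Real.exp (-(σ * M₁ * (t - t0))) ≤ V t t0 k k) ∧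
    (∀ t0, 0 ≤ t0 → ∀ t ∈ Set.Ici t0, ∀ k i : Fin m, i ≠ k →
      Real.exp (-(σ * M₁ * (t - t0))) * (σ * ∫ τ in t0..t, L τ i k) ≤ V t t0 i k) ∧
    (∀ t0, 0 ≤ t0 → ∀ δ T : ℝ, 0 < δ → 0 < T → ∀ k i : Fin m, i ≠ k →
      δ < (∫ τ in t0..(t0 + T), L τ i k) →
      Real.exp (-(σ * M₁ * T)) * σ * δ ≤ V (t0 + T) t0 i k) :=
  stmt_14_general m σ hσ L M₁ hmeas hoff hbdd V hV0 hVd
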